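/- Let X, Z, Y be random variables with (X,Z) independent of the potential outcomes {Y(x,z)} and observed outcome Y = Y(X,Z). If for all x, x' in the support of X and z in the support of Z the distributions of Y(x,z) and Y(x',z) coincide, then Y is conditionally independent of X given Z. -/

import Mathlib

open Finset

open Classical in
/-- Probability of an event `S` under the weight function `p` on a finite sample space. -/
noncomputable def Pr {Ω : Type*} [Fintype Ω] (p : Ω → ℝ) (S : Ω → Prop) : ℝ :=
  ∑ ω, if S ω then p ω else 0

section Aux

open Classical

variable {Ω : Type*} [Fintype Ω] (p : Ω → ℝ)

lemma Pr_nonneg (hp : ∀ ω, 0 ≤ p ω) (S : Ω → Prop) : 0 ≤ Pr p S := by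
  unfold Pr
  apply Finset.sum_nonneg
  intro ω _
  split <;> simp [hp ω]

lemma Pr_congr {S T : Ω → Prop} (h : ∀ ω, S ω ↔ T ω) : Pr p S = Pr p T := by
  unfold Pr
  apply Finset.sum_congr rfl
  intro ω _
  simp [h ω]

lemma Pr_false : Pr p (fun _ => False) = 0 := by
  simp [Pr]

lemma Pr_const_and (c : Prop) (S : Ω → Prop) :
    Pr p (fun ω => c ∧ S ω) = if c then Pr p S else 0 := by
  by_cases hc : c
  · rw [if_pos hc]
    exact Pr_congr p (fun ω => by simp [hc])
  · rw [if_neg hc, ← Pr_false p]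
    exact Pr_congr p (fun ω => by simp [hc])

/-- Partition over the (finitely many realized) joint values of the potential outcomes. -/
lemma Pr_partition {𝒳 𝒵 : Type*} [Fintype 𝒳] [Fintype 𝒵]
    (Y0 : 𝒳 → 𝒵 → Ω → ℝ) (S : Ω → Prop) :
    Pr p S = ∑ g ∈ Finset.univ.image (fun ω a b => Y0 a b ω),
      Pr p (fun ω => S ω ∧ ∀ a b, Y0 a b ω = g a b) := by
  unfold Pr
  rw [Finset.sum_comm]
  apply Finset.sum_congr rfl
  intro ω _
  have h0 : (fun a b => Y0 a b ω) ∈ Finset.univ.image (fun ω a b => Y0 a b ω) :=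
    Finset.mem_image_of_mem _ (Finset.mem_univ ω)
  beta_reduce
  refine Eq.symm ((Finset.sum_eq_single (fun a b => Y0 a b ω) ?_ ?_).trans ?_)
  · intro g _ hne
    apply if_neg
    rintro ⟨_, hall⟩
    exact hne (funext fun a => funext fun b => (hall a b).symm)
  · intro h
    exact absurd h0 h
  · simp

/-- Partition over values of `X`. -/
lemma Pr_partitionX {𝒳 : Type*} [Fintype 𝒳] (X : Ω → 𝒳) (S : Ω → Prop) :
    Pr p S = ∑ x : 𝒳, Pr p (fun ω => S ω ∧ X ω = x) := by
  unfold Pr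
  rw [Finset.sum_comm]
  apply Finset.sum_congr rfl
  intro ω _
  beta_reduce
  refine Eq.symm ((Finset.sum_eq_single (X ω) ?_ ?_).trans ?_)
  · intro x _ hne
    apply if_neg
    rintro ⟨_, hx⟩
    exact hne hx.symm
  · intro h
    exact absurd (Finset.mem_univ _) h
  · simp

/-- The key factorization: `P(Y = t, X = x, Z = z) = P(X = x, Z = z) * P(Y0 x z = t)`. -/
lemma Pr_key {𝒳 𝒵 : Type*} [Fintype 𝒳] [Fintype 𝒵]
    (X : Ω → 𝒳) (Z : Ω → 𝒵) (Y0 : 𝒳 → 𝒵 → Ω → ℝ)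
    (Y : Ω → ℝ) (hY : ∀ ω, Y ω = Y0 (X ω) (Z ω) ω)
    (hrand : ∀ (x : 𝒳) (z : 𝒵) (g : 𝒳 → 𝒵 → ℝ),
      Pr p (fun ω => X ω = x ∧ Z ω = z ∧ ∀ a b, Y0 a b ω = g a b)
        = Pr p (fun ω => X ω = x ∧ Z ω = z) * Pr p (fun ω => ∀ a b, Y0 a b ω = g a b))
    (t : ℝ) (x : 𝒳) (z : 𝒵) :
    Pr p (fun ω => Y ω = t ∧ X ω = x ∧ Z ω = z)
      = Pr p (fun ω => X ω = x ∧ Z ω = z) * Pr p (fun ω => Y0 x z ω = t) := by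
  rw [Pr_partition p Y0 (fun ω => Y ω = t ∧ X ω = x ∧ Z ω = z),
      Pr_partition p Y0 (fun ω => Y0 x z ω = t), Finset.mul_sum]
  apply Finset.sum_congr rfl
  intro g _
  have hL : Pr p (fun ω => (Y ω = t ∧ X ω = x ∧ Z ω = z) ∧ ∀ a b, Y0 a b ω = g a b)
      = Pr p (fun ω => g x z = t ∧ (X ω = x ∧ Z ω = z ∧ ∀ a b, Y0 a b ω = g a b)) := by
    apply Pr_congr
    intro ω
    constructor
    · rintro ⟨⟨hYt, hx, hz⟩, hall⟩
      refine ⟨?_, hx, hz, hall⟩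
      rw [← hall x z, ← hx, ← hz, ← hY ω, hYt]
    · rintro ⟨hgt, hx, hz, hall⟩
      refine ⟨⟨?_, hx, hz⟩, hall⟩
      rw [hY ω, hx, hz, hall x z, hgt]
  have hR : Pr p (fun ω => Y0 x z ω = t ∧ ∀ a b, Y0 a b ω = g a b)
      = Pr p (fun ω => g x z = t ∧ ∀ a b, Y0 a b ω = g a b) := by
    apply Pr_congr
    intro ω
    constructor
    · rintro ⟨ht, hall⟩
      exact ⟨by rw [← hall x z]; exact ht, hall⟩
    · rintro ⟨ht, hall⟩
      exact ⟨by rw [hall x z]; exact ht, hall⟩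
  rw [hL, hR, Pr_const_and, Pr_const_and, hrand x z g]
  by_cases hgt : g x z = t
  · simp [hgt]
  · simp [hgt]

end Aux

theorem stmt1 {Ω 𝒳 𝒵 : Type*} [Fintype Ω] [Fintype 𝒳] [Fintype 𝒵]
    (p : Ω → ℝ) (hp : ∀ ω, 0 ≤ p ω) (hp1 : ∑ ω, p ω = 1)
    (X : Ω → 𝒳) (Z : Ω → 𝒵) (Y0 : 𝒳 → 𝒵 → Ω → ℝ)
    (Y : Ω → ℝ) (hY : ∀ ω, Y ω = Y0 (X ω) (Z ω) ω)
    -- randomization: (X,Z) is independent of the family of potential outcomes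
    (hrand : ∀ (x : 𝒳) (z : 𝒵) (g : 𝒳 → 𝒵 → ℝ),
      Pr p (fun ω => X ω = x ∧ Z ω = z ∧ ∀ a b, Y0 a b ω = g a b)
        = Pr p (fun ω => X ω = x ∧ Z ω = z) * Pr p (fun ω => ∀ a b, Y0 a b ω = g a b))
    -- the null hypothesis: equal distributions of potential outcomes on the support
    (hH0 : ∀ (x x' : 𝒳) (z : 𝒵),
      0 < Pr p (fun ω => X ω = x ∧ Z ω = z) →
      0 < Pr p (fun ω => X ω = x' ∧ Z ω = z) →
      ∀ t : ℝ, Pr p (fun ω => Y0 x z ω = t) = Pr p (fun ω => Y0 x' z ω = t)) :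
    -- conclusion: Y is conditionally independent of X given Z
    ∀ (t : ℝ) (x : 𝒳) (z : 𝒵), 0 < Pr p (fun ω => Z ω = z) →
      Pr p (fun ω => Y ω = t ∧ X ω = x ∧ Z ω = z) / Pr p (fun ω => Z ω = z)
        = (Pr p (fun ω => Y ω = t ∧ Z ω = z) / Pr p (fun ω => Z ω = z))
          * (Pr p (fun ω => X ω = x ∧ Z ω = z) / Pr p (fun ω => Z ω = z)) := by
  intro t x z hz
  have key : ∀ x' : 𝒳, Pr p (fun ω => Y ω = t ∧ X ω = x' ∧ Z ω = z)
      = Pr p (fun ω => X ω = x' ∧ Z ω = z) * Pr p (fun ω => Y0 x' z ω = t) :=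
    fun x' => Pr_key p X Z Y0 Y hY hrand t x' z
  by_cases hx : 0 < Pr p (fun ω => X ω = x ∧ Z ω = z)
  · -- rewrite P(Y = t, Z = z) and P(Z = z) as sums over x'
    have hzsum : Pr p (fun ω => Z ω = z) = ∑ x' : 𝒳, Pr p (fun ω => X ω = x' ∧ Z ω = z) := by
      rw [Pr_partitionX p X (fun ω => Z ω = z)]
      exact Finset.sum_congr rfl fun x' _ => Pr_congr p (fun ω => and_comm)
    have hyz : Pr p (fun ω => Y ω = t ∧ Z ω = z)
        = ∑ x' : 𝒳, Pr p (fun ω => Y ω = t ∧ X ω = x' ∧ Z ω = z) := by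
      rw [Pr_partitionX p X (fun ω => Y ω = t ∧ Z ω = z)]
      exact Finset.sum_congr rfl fun x' _ => Pr_congr p (fun ω => by tauto)
    have hyz2 : Pr p (fun ω => Y ω = t ∧ Z ω = z)
        = Pr p (fun ω => Y0 x z ω = t) * Pr p (fun ω => Z ω = z) := by
      rw [hyz, hzsum, Finset.mul_sum]
      apply Finset.sum_congr rfl
      intro x' _
      rw [key x']
      by_cases hx' : 0 < Pr p (fun ω => X ω = x' ∧ Z ω = z)
      · rw [← hH0 x x' z hx hx' t]; ring
      · have h0 : Pr p (fun ω => X ω = x' ∧ Z ω = z) = 0 :=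
          le_antisymm (not_lt.1 hx') (Pr_nonneg p hp _)
        rw [h0]; ring
    rw [key x, hyz2]
    have hz0 : Pr p (fun ω => Z ω = z) ≠ 0 := ne_of_gt hz
    field_simp
  · have h0 : Pr p (fun ω => X ω = x ∧ Z ω = z) = 0 :=
      le_antisymm (not_lt.1 hx) (Pr_nonneg p hp _)
    rw [key x, h0]
    simp
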